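/- arXiv:1510.06233 — 13 statements merged into one kernel-verified Lean document; each statement's English description precedes it below -/
import Mathlib

section
/- Let R be a commutative ring and i : R → R a total operation such that (R, i) is an inversive meadow, i.e., i (i x) = x and x * (x * i x) = x hold for all x ∈ R. Then the following equations are derivable consequences: i 0 = 0, i 1 = 1, i (-x) = -(i x) for all x ∈ R, and i (x * y) = i x * i y for all x, y ∈ R. -/
/-! Both axioms together say that `i x` is a pseudo-inverse of `x` (`x² y = x` and `y² x = y`).
In a commutative ring an element has at most one pseudo-inverse, and pseudo-inverses of `0`, `1`,
`-x` and `x * y` are visibly `0`, `1`, `-y` and the product of the pseudo-inverses; so `i` must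
take these values. -/

def IsPseudoInverse {R : Type*} [CommRing R] (x y : R) : Prop :=
  x * x * y = x ∧ y * y * x = y

namespace IsPseudoInverse

variable {R : Type*} [CommRing R] {x y z w : R}

theorem unique (hy : IsPseudoInverse x y) (hz : IsPseudoInverse x z) : y = z := by
  linear_combination (x * z - 1) * hy.2 - y ^ 2 * hz.1 - (x * y - 1) * hz.2 + z ^ 2 * hy.1

theorem zero : IsPseudoInverse (0 : R) 0 := by
  simp [IsPseudoInverse]

theorem one : IsPseudoInverse (1 : R) 1 := by
  simp [IsPseudoInverse]

theorem neg (h : IsPseudoInverse x y) : IsPseudoInverse (-x) (-y) :=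
  ⟨by linear_combination -h.1, by linear_combination -h.2⟩

theorem mul (hxy : IsPseudoInverse x y) (hzw : IsPseudoInverse z w) :
    IsPseudoInverse (x * z) (y * w) :=
  ⟨by linear_combination z * z * w * hxy.1 + x * hzw.1,
    by linear_combination w * w * z * hxy.2 + y * hzw.2⟩

end IsPseudoInverse

theorem isPseudoInverse_of_inversive {R : Type*} [CommRing R] {i : R → R}
    (h1 : ∀ x, i (i x) = x) (h2 : ∀ x, x * (x * i x) = x) (x : R) :
    IsPseudoInverse x (i x) :=
  ⟨by linear_combination h2 x, by simpa only [h1, mul_assoc] using h2 (i x)⟩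

theorem inversive_meadow_derived_equations {R : Type*} [CommRing R] (i : R → R)
    (h1 : ∀ x : R, i (i x) = x) (h2 : ∀ x : R, x * (x * i x) = x) :
    i 0 = 0 ∧ i 1 = 1 ∧ (∀ x : R, i (-x) = -(i x)) ∧
      (∀ x y : R, i (x * y) = i x * i y) := by
  have hi := isPseudoInverse_of_inversive h1 h2
  exact ⟨(hi 0).unique .zero, (hi 1).unique .one, fun x => (hi (-x)).unique (hi x).neg,
    fun x y => (hi (x * y)).unique ((hi x).mul (hi y))⟩
end

section
/- Let R be a commutative ring with 0 ≠ 1 and let i : R → R be a total operation. Then the following are equivalent: (a) (R, i) is an inversive meadow (i (i x) = x and x * (x * i x) = x for all x) satisfying the cancellation axiom (for all x, y, z: x ≠ 0 and x * y = x * z imply y = z); (b) (R, i) is a zero-totalized field, i.e., i 0 = 0 and x * i x = 1 for all x ≠ 0. In other words, the class of non-trivial inversive cancellation meadows coincides with the class of zero-totalized fields. -/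
/-!
In an inversive meadow `x * (x * i x) = x` reads `x * (x * i x) = x * 1`, so cancellation by a nonzero
`x` gives `x * i x = 1`; and `i 0 = 0` holds in every inversive meadow. Conversely, if every nonzero
element is a unit with inverse `i x`, cancellation is multiplication by `i x`, and the meadow axioms
follow by splitting into `x = 0` and `x ≠ 0`.
-/

section

variable {R : Type*} [CommRing R] {i : R → R}

theorem inv_zero_eq_zero_of_meadow (hii : ∀ x, i (i x) = x) (hmul : ∀ x, x * (x * i x) = x) :
    i 0 = 0 :=
  calc i 0 = i 0 * (i 0 * i (i 0)) := (hmul (i 0)).symm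
    _ = 0 := by rw [hii, mul_zero, mul_zero]

theorem mul_inv_self_of_meadow_cancel (hmul : ∀ x, x * (x * i x) = x)
    (hcancel : ∀ x y z : R, x ≠ 0 → x * y = x * z → y = z) {x : R} (hx : x ≠ 0) :
    x * i x = 1 :=
  hcancel x _ _ hx (by rw [hmul, mul_one])

theorem mul_left_cancel_of_mul_inv_self (hinv : ∀ x : R, x ≠ 0 → x * i x = 1) {x y z : R}
    (hx : x ≠ 0) (h : x * y = x * z) : y = z :=
  (IsUnit.of_mul_eq_one (i x) (hinv x hx)).mul_left_cancel h

theorem inv_ne_zero_of_mul_inv_self (hinv : ∀ x : R, x ≠ 0 → x * i x = 1) {x : R} (hx : x ≠ 0) :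
    i x ≠ 0 := by
  intro hix
  apply hx
  calc x = x * (x * i x) := by rw [hinv x hx, mul_one]
    _ = 0 := by rw [hix, mul_zero, mul_zero]

theorem inv_inv_of_zero_totalized (h0 : i 0 = 0) (hinv : ∀ x : R, x ≠ 0 → x * i x = 1) (x : R) :
    i (i x) = x := by
  rcases eq_or_ne x 0 with rfl | hx
  · rw [h0, h0]
  · have hix := inv_ne_zero_of_mul_inv_self hinv hx
    apply mul_left_cancel_of_mul_inv_self hinv hix
    rw [hinv (i x) hix, mul_comm, hinv x hx]

theorem mul_mul_inv_self_of_zero_totalized (hinv : ∀ x : R, x ≠ 0 → x * i x = 1) (x : R) :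
    x * (x * i x) = x := by
  rcases eq_or_ne x 0 with rfl | hx
  · rw [zero_mul]
  · rw [hinv x hx, mul_one]

end

theorem cancellation_meadow_iff_zero_totalized_field_general {R : Type*} [CommRing R]
    (i : R → R) :
    ((∀ x : R, i (i x) = x) ∧ (∀ x : R, x * (x * i x) = x) ∧
        (∀ x y z : R, x ≠ 0 → x * y = x * z → y = z)) ↔
      (i 0 = 0 ∧ ∀ x : R, x ≠ 0 → x * i x = 1) := by
  constructor
  · rintro ⟨hii, hmul, hcancel⟩
    exact ⟨inv_zero_eq_zero_of_meadow hii hmul,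
      fun x hx => mul_inv_self_of_meadow_cancel hmul hcancel hx⟩
  · rintro ⟨h0, hinv⟩
    exact ⟨inv_inv_of_zero_totalized h0 hinv, mul_mul_inv_self_of_zero_totalized hinv,
      fun _ _ _ hx h => mul_left_cancel_of_mul_inv_self hinv hx h⟩

theorem cancellation_meadow_iff_zero_totalized_field {R : Type*} [CommRing R]
    (hne : (0 : R) ≠ 1) (i : R → R) :
    ((∀ x : R, i (i x) = x) ∧ (∀ x : R, x * (x * i x) = x) ∧
        (∀ x y z : R, x ≠ 0 → x * y = x * z → y = z)) ↔
      (i 0 = 0 ∧ ∀ x : R, x ≠ 0 → x * i x = 1) :=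
  cancellation_meadow_iff_zero_totalized_field_general i
end

section
/- Let (R, i) be an inversive meadow such that (n : R) * i (n : R) = 1 for every positive integer n. Then there exists a unique ring homomorphism φ : ℚ → R satisfying φ (x⁻¹) = i (φ x) for all x ∈ ℚ, where ⁻¹ is the zero-totalized inverse of ℚ (so 0⁻¹ = 0, as in Mathlib). This expresses that ℚ with zero-totalized inverse is the initial algebra among inversive meadows in which all positive numerals are invertible. -/
/-!
Since every positive integer is invertible in `R`, so is every nonzero integer, and the
universal property of `ℚ` as the fraction field of `ℤ` yields a ring homomorphism `ℚ →+* R`;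
ring homomorphisms out of `ℚ` are unique. Any ring homomorphism `f` automatically commutes with
the inverses: for `x ≠ 0`, `f x * f x⁻¹ = 1`, and in an inversive meadow `i a` is the only
candidate for an inverse of `a`; for `x = 0` the meadow axioms force `i 0 = 0`.
-/

theorem isUnit_intCast_of_isUnit_natCast {R : Type*} [Ring R]
    (h : ∀ n : ℕ, 0 < n → IsUnit (n : R)) {z : ℤ} (hz : z ≠ 0) : IsUnit (z : R) := by
  have hunit := h z.natAbs (Int.natAbs_pos.mpr hz)
  rcases Int.natAbs_eq z with hpos | hneg
  · rw [hpos, Int.cast_natCast]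
    exact hunit
  · rw [hneg, Int.cast_neg, Int.cast_natCast]
    exact hunit.neg

theorem nonempty_ratRingHom_of_isUnit_natCast {R : Type*} [CommRing R]
    (h : ∀ n : ℕ, 0 < n → IsUnit (n : R)) : Nonempty (ℚ →+* R) :=
  ⟨IsLocalization.lift (M := nonZeroDivisors ℤ) (S := ℚ) (g := Int.castRingHom R) fun z =>
    isUnit_intCast_of_isUnit_natCast h (nonZeroDivisors.coe_ne_zero z)⟩

section InversiveMeadow

variable {R : Type*} [CommRing R] {i : R → R}

theorem inv_eq_of_mul_eq_one_of_meadow (h2 : ∀ x : R, x * (x * i x) = x) {a b : R}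
    (hab : a * b = 1) : i a = b := by
  have hinv : a * i a = 1 := by linear_combination b * h2 a + (1 - a * i a) * hab
  linear_combination b * hinv - i a * hab

theorem inv_zero_of_meadow (h1 : ∀ x : R, i (i x) = x) (h2 : ∀ x : R, x * (x * i x) = x) :
    i 0 = 0 := by
  simpa [h1] using (h2 (i 0)).symm

theorem map_inv_of_meadow (h1 : ∀ x : R, i (i x) = x) (h2 : ∀ x : R, x * (x * i x) = x)
    (f : ℚ →+* R) (x : ℚ) : f x⁻¹ = i (f x) := by
  rcases eq_or_ne x 0 with rfl | hx
  · simp [inv_zero_of_meadow h1 h2]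
  · refine (inv_eq_of_mul_eq_one_of_meadow h2 ?_).symm
    rw [← map_mul, mul_inv_cancel₀ hx, map_one]

end InversiveMeadow

theorem rat_initial_meadow {R : Type*} [CommRing R] (i : R → R)
    (h1 : ∀ x : R, i (i x) = x) (h2 : ∀ x : R, x * (x * i x) = x)
    (hn : ∀ n : ℕ, 0 < n → (n : R) * i (n : R) = 1) :
    ∃! φ : ℚ →+* R, ∀ x : ℚ, φ x⁻¹ = i (φ x) := by
  obtain ⟨φ⟩ := nonempty_ratRingHom_of_isUnit_natCast fun n hpos =>
    IsUnit.of_mul_eq_one _ (hn n hpos)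
  exact ⟨φ, map_inv_of_meadow h1 h2 φ, fun ψ _ => RingHom.ext_rat ψ φ⟩
end

section
/- Let (R, i) be an inversive meadow such that (1 + x^2 + y^2) * i (1 + x^2 + y^2) = 1 for all x, y ∈ R. Then (n : R) * i (n : R) = 1 for every positive integer n. (This is the key fact making the axiom (1 + x² + y²)·(1 + x² + y²)⁻¹ = 1 an equivalent replacement for the infinite axiom family n·n⁻¹ = 1, n ≥ 1, in the initial-algebra specification of the rational numbers as a meadow.) -/
/-! Every prime `p` divides some `1 + a² + b²`, because `-1` is a sum of two squares in the field
`ZMod p`. So the hypothesis makes every prime, hence every positive integer, a unit of `R`; and for a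
unit `n`, the meadow law `n * (n * i n) = n` cancels to `n * i n = 1`. -/

theorem Nat.Prime.exists_dvd_one_add_sq_add_sq {p : ℕ} (hp : p.Prime) :
    ∃ a b : ℕ, p ∣ 1 + a ^ 2 + b ^ 2 := by
  have : Fact p.Prime := ⟨hp⟩
  obtain ⟨a, b, hab⟩ := ZMod.sq_add_sq p (-1)
  refine ⟨a.val, b.val, ?_⟩
  rw [← ZMod.natCast_eq_zero_iff]
  push_cast
  rw [ZMod.natCast_val, ZMod.natCast_val, ZMod.cast_id, ZMod.cast_id]
  linear_combination hab

theorem isUnit_natCast_of_isUnit_one_add_sq_add_sq {R : Type*} [CommRing R]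
    (h : ∀ x y : R, IsUnit (1 + x ^ 2 + y ^ 2)) {n : ℕ} (hn : n ≠ 0) : IsUnit (n : R) := by
  induction n using Nat.recOnMul with
  | zero => exact absurd rfl hn
  | one => simp
  | prime p hp =>
    obtain ⟨a, b, m, hm⟩ := hp.exists_dvd_one_add_sq_add_sq
    have hu : IsUnit ((1 + a ^ 2 + b ^ 2 : ℕ) : R) := by
      push_cast
      exact h _ _
    rw [hm, Nat.cast_mul] at hu
    exact isUnit_of_mul_isUnit_left hu
  | mul a b iha ihb =>
    rw [Nat.cast_mul]
    exact (iha (left_ne_zero_of_mul hn)).mul (ihb (right_ne_zero_of_mul hn))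

theorem sum_of_squares_axiom_implies_numerals_invertible_general {R : Type*} [CommRing R]
    (i : R → R)
    (h2 : ∀ x : R, x * (x * i x) = x)
    (h3 : ∀ x y : R, (1 + x ^ 2 + y ^ 2) * i (1 + x ^ 2 + y ^ 2) = 1) :
    ∀ n : ℕ, 0 < n → (n : R) * i (n : R) = 1 := by
  intro n hn
  have hu : IsUnit (n : R) :=
    isUnit_natCast_of_isUnit_one_add_sq_add_sq (fun x y => .of_mul_eq_one _ (h3 x y))
      hn.ne'
  exact hu.mul_left_cancel (by rw [h2, mul_one])

theorem sum_of_squares_axiom_implies_numerals_invertible {R : Type*} [CommRing R]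
    (i : R → R)
    (h1 : ∀ x : R, i (i x) = x) (h2 : ∀ x : R, x * (x * i x) = x)
    (h3 : ∀ x y : R, (1 + x ^ 2 + y ^ 2) * i (1 + x ^ 2 + y ^ 2) = 1) :
    ∀ n : ℕ, 0 < n → (n : R) * i (n : R) = 1 :=
  sum_of_squares_axiom_implies_numerals_invertible_general i h2 h3
end

section
/- Let (R, i) be an inversive meadow and define d : R → R → R by d x y := x * i y. Then d satisfies the divisive meadow axioms: d 1 (d 1 x) = x, d (x * x) x = x, and d x y = x * d 1 y for all x, y ∈ R; moreover i x = d 1 x for all x ∈ R. (This is one half of the definitional equivalence between inversive and divisive meadows.) -/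
theorem inversive_to_divisive {R : Type*} [CommRing R] (i : R → R)
    (h1 : ∀ x : R, i (i x) = x) (h2 : ∀ x : R, x * (x * i x) = x) :
    let d : R → R → R := fun x y => x * i y
    (∀ x : R, d 1 (d 1 x) = x) ∧ (∀ x : R, d (x * x) x = x) ∧
      (∀ x y : R, d x y = x * d 1 y) ∧ (∀ x : R, i x = d 1 x) := by
  intro d
  refine ⟨fun x => ?_, fun x => ?_, fun x y => ?_, fun x => ?_⟩
  · simp only [d, one_mul, h1]
  · simp only [d, mul_assoc, h2]
  · simp only [d, one_mul]
  · simp only [d, one_mul]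
end

section
/- Let (R, d) be a divisive meadow and define i : R → R by i x := d 1 x. Then i satisfies the inversive meadow axioms: i (i x) = x and x * (x * i x) = x for all x ∈ R; moreover d x y = x * i y for all x, y ∈ R. (This is the other half of the definitional equivalence between inversive and divisive meadows.) -/
theorem divisive_to_inversive {R : Type*} [CommRing R] (d : R → R → R)
    (h1 : ∀ x : R, d 1 (d 1 x) = x) (h2 : ∀ x : R, d (x * x) x = x)
    (h3 : ∀ x y : R, d x y = x * d 1 y) :
    let i : R → R := fun x => d 1 x
    (∀ x : R, i (i x) = x) ∧ (∀ x : R, x * (x * i x) = x) ∧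
      (∀ x y : R, d x y = x * i y) := by
  intro i
  refine ⟨h1, fun x => ?_, h3⟩
  calc x * (x * i x) = d (x * x) x := by rw [h3, mul_assoc]
    _ = x := h2 x
end

section
/- Let (R, d) be a divisive meadow and let a ∈ R be an element of the minimal divisive submeadow of R, i.e., a belongs to every subring S of R that is closed under d (meaning x, y ∈ S implies d x y ∈ S). Then there exists a finite list of pairs of integers (p₁, q₁), …, (p_r, q_r) such that a = ∑_{j=1}^{r} d ((p_j : R)) ((q_j : R)). (This is the semantic content of the normal form theorem: every closed term over the signature of divisive meadows is derivably equal to a basic term, i.e., a finite sum of signed fractions of numerals.) -/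
/-!
Write `inv x` for `d 1 x`. The axioms say precisely that `inv x` is the inverse of `x` in the sense
of semigroup theory (`x * x * inv x = x`, `inv x * inv x * x = inv x`); such inverses are unique in a
commutative monoid, so `inv` is multiplicative and fixes idempotents. Hence the sums of fractions
`p * inv q` (`p q : ℤ`) form a subring, and it remains to show that it is closed under `inv`.

For that, split along the idempotent `ε = m * inv m` attached to a denominator `m`: on `ε` two
fractions can be brought to a common denominator, on `1 - ε` the fraction `n * inv m` vanishes.
Induction on the number of summands, keeping a separate accumulated fraction `N * inv M` and an
idempotent `δ` of the subring on which `M` is invertible, shows that `inv x * δ` stays in the subring.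
-/

def IsSemigroupInverse {M : Type*} [Mul M] (m t : M) : Prop :=
  m * m * t = m ∧ t * t * m = t

namespace IsSemigroupInverse

variable {M : Type*} [CommSemigroup M] {m n s t t' : M}

theorem symm (h : IsSemigroupInverse m t) : IsSemigroupInverse t m := ⟨h.2, h.1⟩

theorem eq_mul_mul (h : IsSemigroupInverse m t) (h' : m * m * t' = m) : t = t * m * t' :=
  calc t = t * t * (m * m * t') := by rw [h', h.2]
    _ = t * t * m * (m * t') := by simp only [mul_assoc]
    _ = t * m * t' := by rw [h.2, mul_assoc]

theorem unique (h : IsSemigroupInverse m t) (h' : IsSemigroupInverse m t') : t = t' :=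
  calc t = t * m * t' := h.eq_mul_mul h'.1
    _ = t' * m * t := by simp only [mul_comm, mul_left_comm]
    _ = t' := (h'.eq_mul_mul h.1).symm

theorem mul (h : IsSemigroupInverse m s) (h' : IsSemigroupInverse n t) :
    IsSemigroupInverse (m * n) (s * t) := by
  constructor
  · calc m * n * (m * n) * (s * t) = m * m * s * (n * n * t) := by
          simp only [mul_comm, mul_left_comm]
      _ = m * n := by rw [h.1, h'.1]
  · calc s * t * (s * t) * (m * n) = s * s * m * (t * t * n) := by
          simp only [mul_comm, mul_left_comm]
      _ = s * t := by rw [h.2, h'.2]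

theorem of_isIdempotentElem {e : M} (he : IsIdempotentElem e) : IsSemigroupInverse e e :=
  ⟨by rw [he.eq, he.eq], by rw [he.eq, he.eq]⟩

end IsSemigroupInverse

def IsMeadowInverse {R : Type*} [Mul R] (inv : R → R) : Prop :=
  ∀ x, IsSemigroupInverse x (inv x)

namespace IsMeadowInverse

section CommMonoid

variable {R : Type*} [CommMonoid R] {inv : R → R} (hinv : IsMeadowInverse inv)
include hinv

theorem inv_eq {x t : R} (h : IsSemigroupInverse x t) : inv x = t :=
  (hinv x).unique h

theorem inv_inv (x : R) : inv (inv x) = x :=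
  hinv.inv_eq (hinv x).symm

theorem inv_mul (x y : R) : inv (x * y) = inv x * inv y :=
  hinv.inv_eq ((hinv x).mul (hinv y))

theorem inv_one : inv (1 : R) = 1 :=
  hinv.inv_eq ⟨by simp, by simp⟩

theorem inv_of_isIdempotentElem {e : R} (he : IsIdempotentElem e) : inv e = e :=
  hinv.inv_eq (.of_isIdempotentElem he)

theorem isIdempotentElem_mul_inv (x : R) : IsIdempotentElem (x * inv x) := by
  unfold IsIdempotentElem
  calc x * inv x * (x * inv x) = x * x * inv x * inv x := by simp only [mul_comm, mul_left_comm]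
    _ = x * inv x := by rw [(hinv x).1]

theorem inv_mul_eq_of_mul_eq {x y e : R} (he : IsIdempotentElem e) (h : x * e = y * e) :
    inv x * e = inv y * e := by
  rw [← hinv.inv_of_isIdempotentElem he, ← hinv.inv_mul, h, hinv.inv_mul]

end CommMonoid

variable {R : Type*} [CommRing R] {inv : R → R} (hinv : IsMeadowInverse inv)
include hinv

theorem inv_mul_one_sub_mul_inv (x : R) : inv x * (1 - x * inv x) = 0 := by
  linear_combination -(hinv x).2

end IsMeadowInverse

section FracSum

variable {R : Type*} [CommRing R]

def fracSum (inv : R → R) (L : List (ℤ × ℤ)) : R :=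
  (L.map fun pq => (pq.1 : R) * inv pq.2).sum

variable {inv : R → R}

@[simp] theorem fracSum_nil : fracSum inv [] = 0 := rfl

@[simp] theorem fracSum_cons (pq : ℤ × ℤ) (L : List (ℤ × ℤ)) :
    fracSum inv (pq :: L) = pq.1 * inv pq.2 + fracSum inv L := List.sum_cons

theorem fracSum_singleton (p q : ℤ) : fracSum inv [(p, q)] = p * inv q := by simp

theorem fracSum_append (L L' : List (ℤ × ℤ)) :
    fracSum inv (L ++ L') = fracSum inv L + fracSum inv L' := by
  simp [fracSum]

theorem fracSum_map_neg (L : List (ℤ × ℤ)) :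
    fracSum inv (L.map fun pq => (-pq.1, pq.2)) = -fracSum inv L := by
  induction L with
  | nil => simp
  | cons pq L ih => simp only [List.map_cons, fracSum_cons, ih, Int.cast_neg, neg_mul, neg_add]

theorem IsMeadowInverse.fracSum_mul (hinv : IsMeadowInverse inv) (L L' : List (ℤ × ℤ)) :
    fracSum inv L * fracSum inv L' =
      fracSum inv (L.flatMap fun a => L'.map fun b => (a.1 * b.1, a.2 * b.2)) := by
  induction L with
  | nil => simp
  | cons pq L ih =>
    rw [List.flatMap_cons, fracSum_append, ← ih, fracSum_cons, add_mul]
    congr 1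
    simp only [fracSum, List.map_map, ← List.sum_map_mul_left]
    congr 1
    refine List.map_congr_left fun b _ => ?_
    simp only [Function.comp_apply, Int.cast_mul, hinv.inv_mul]
    ring

end FracSum

namespace IsMeadowInverse

variable {R : Type*} [CommRing R] {inv : R → R} (hinv : IsMeadowInverse inv)

def fracSumSubring : Subring R where
  carrier := Set.range (fracSum inv)
  zero_mem' := ⟨[], rfl⟩
  one_mem' := ⟨[(1, 1)], by simp [hinv.inv_one]⟩
  add_mem' := by
    rintro _ _ ⟨L, rfl⟩ ⟨L', rfl⟩
    exact ⟨L ++ L', fracSum_append L L'⟩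
  neg_mem' := by
    rintro _ ⟨L, rfl⟩
    exact ⟨_, fracSum_map_neg L⟩
  mul_mem' := by
    rintro _ _ ⟨L, rfl⟩ ⟨L', rfl⟩
    exact ⟨_, (hinv.fracSum_mul L L').symm⟩

include hinv

theorem int_mul_inv_mem_fracSumSubring (p q : ℤ) : (p : R) * inv q ∈ hinv.fracSumSubring :=
  ⟨[(p, q)], fracSum_singleton p q⟩

theorem inv_fracSum_add_mul_mem (L : List (ℤ × ℤ)) (N M : ℤ) {δ : R}
    (hδB : δ ∈ hinv.fracSumSubring) (hδ : IsIdempotentElem δ) (hM : M * inv M * δ = δ) :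
    inv (fracSum inv L + N * inv M) * δ ∈ hinv.fracSumSubring := by
  induction L generalizing N M δ with
  | nil =>
    rw [fracSum_nil, zero_add, hinv.inv_mul, hinv.inv_inv, mul_comm (inv _)]
    exact mul_mem (hinv.int_mul_inv_mem_fracSumSubring M N) hδB
  | cons nm L ih =>
    obtain ⟨n, m⟩ := nm
    set ε : R := m * inv m
    have hε : IsIdempotentElem ε := hinv.isIdempotentElem_mul_inv _
    have hεB : ε ∈ hinv.fracSumSubring := hinv.int_mul_inv_mem_fracSumSubring m m
    have hsplit : inv (fracSum inv ((n, m) :: L) + N * inv M) * δ =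
        inv (fracSum inv ((n, m) :: L) + N * inv M) * (δ * ε) +
          inv (fracSum inv ((n, m) :: L) + N * inv M) * (δ * (1 - ε)) := by ring
    have on_ε : (fracSum inv ((n, m) :: L) + N * inv M) * (δ * ε) =
        (fracSum inv L + ((N * m + n * M : ℤ) : R) * inv ((M * m : ℤ) : R)) * (δ * ε) := by
      simp only [fracSum_cons, Int.cast_add, Int.cast_mul, hinv.inv_mul]
      linear_combination (-(N * inv M * δ)) * hε.eq + (-(n * inv m * ε)) * hM
    have off_ε : (fracSum inv ((n, m) :: L) + N * inv M) * (δ * (1 - ε)) =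
        (fracSum inv L + N * inv M) * (δ * (1 - ε)) := by
      simp only [fracSum_cons]
      linear_combination (n * δ) * hinv.inv_mul_one_sub_mul_inv m
    rw [hsplit, hinv.inv_mul_eq_of_mul_eq (hδ.mul hε) on_ε,
      hinv.inv_mul_eq_of_mul_eq (hδ.mul hε.one_sub) off_ε]
    refine add_mem (ih _ _ (mul_mem hδB hεB) (hδ.mul hε) ?_)
      (ih _ _ (mul_mem hδB (sub_mem (one_mem _) hεB)) (hδ.mul hε.one_sub) ?_)
    · push_cast
      rw [hinv.inv_mul]
      linear_combination ε * ε * hM + δ * hε.eq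
    · linear_combination (1 - ε) * hM

theorem inv_mem_fracSumSubring {x : R} (hx : x ∈ hinv.fracSumSubring) :
    inv x ∈ hinv.fracSumSubring := by
  obtain ⟨L, rfl⟩ := hx
  simpa [hinv.inv_one] using
    hinv.inv_fracSum_add_mul_mem L 0 1 (one_mem _) IsIdempotentElem.one (by simp [hinv.inv_one])

end IsMeadowInverse

theorem basic_term_normal_form {R : Type*} [CommRing R] (d : R → R → R)
    (h1 : ∀ x : R, d 1 (d 1 x) = x) (h2 : ∀ x : R, d (x * x) x = x)
    (h3 : ∀ x y : R, d x y = x * d 1 y)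
    (a : R)
    (ha : ∀ S : Subring R, (∀ x y : R, x ∈ S → y ∈ S → d x y ∈ S) → a ∈ S) :
    ∃ L : List (ℤ × ℤ), a = (L.map (fun pq => d ((pq.1 : R)) ((pq.2 : R)))).sum := by
  have hinv : IsMeadowInverse (d 1) := fun x =>
    ⟨(h3 _ _).symm.trans (h2 x), by simpa only [h1] using (h3 _ _).symm.trans (h2 (d 1 x))⟩
  obtain ⟨L, rfl⟩ := ha hinv.fracSumSubring fun x y hx hy =>
    h3 x y ▸ mul_mem hx (hinv.inv_mem_fracSumSubring hy)
  exact ⟨L, congrArg List.sum (List.map_congr_left fun pq _ => (h3 _ _).symm)⟩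
end

section
/- Let (R, d) be an infinite minimal divisive meadow, i.e., R is infinite and the only subring of R closed under d (x, y ∈ S implies d x y ∈ S) is R itself. Then ℚ is a homomorphic image of R: there exists a surjective ring homomorphism φ : R → ℚ such that φ (d x y) = φ x / φ y for all x, y ∈ R, where / is the zero-totalized division of ℚ (a/0 = 0, as in Mathlib). -/
/-!
If `n = 0` in `R` for some `n > 0`, the prime subring of `R` is finite. In a finite commutative
ring an Artinian argument gives `z` with `y ^ (k + 1) * z = y ^ k`, and then the meadow inverse
`d 1 y` equals `y * z ^ 2`; so the prime subring is closed under `d`, hence is all of `R` by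
minimality, contradicting infiniteness. Thus `R` has characteristic zero, and some prime ideal `P`
contains no positive integer. Ring homomorphisms from a meadow into a field turn `d` into
division, so by minimality the image of `R` in the fraction field of `R ⧸ P` is contained in the
prime field `ℚ`, and the resulting map `R →+* ℚ` hits every `a / b` as the image of `d a b`.
-/

theorem eq_mul_sq_of_pow_succ_mul_eq_pow {M : Type*} [CommMonoid M] {x y z : M} {n : ℕ}
    (hx : x * x * y = x) (hy : y * y * x = y) (hz : x ^ (n + 1) * z = x ^ n) :
    y = x * z ^ 2 := by
  have he : IsIdempotentElem (x * y) := by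
    rw [IsIdempotentElem, ← mul_assoc, mul_right_comm x y x, hx]
  have hxz : x * z = x * y :=
    calc x * z = x * (x * y) ^ (n + 1) * z := by rw [he.pow_succ_eq, ← mul_assoc, hx]
      _ = y ^ (n + 1) * x * (x ^ (n + 1) * z) := by rw [mul_pow]; ac_rfl
      _ = (x * y) ^ (n + 1) := by rw [hz, mul_assoc, ← pow_succ', mul_pow, mul_comm]
      _ = x * y := he.pow_succ_eq n
  calc y = y * (x * z) := by rw [hxz, ← mul_assoc, mul_right_comm, hy]
    _ = x * z ^ 2 := by rw [← mul_assoc, mul_comm y x, ← hxz, mul_assoc, sq]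

theorem Ideal.exists_isPrime_charZero_quotient (R : Type*) [CommRing R] [CharZero R] :
    ∃ P : Ideal R, P.IsPrime ∧ CharZero (R ⧸ P) := by
  set M : Submonoid R := (nonZeroDivisors ℕ).map (Nat.castRingHom R)
  have hM : Disjoint ((⊥ : Ideal R) : Set R) M := by
    rw [Set.disjoint_left]
    rintro _ h0 ⟨n, hn, rfl⟩
    exact nonZeroDivisors.ne_zero hn (Nat.cast_eq_zero.mp h0)
  obtain ⟨P, hP, -, hPM⟩ := Ideal.exists_le_prime_disjoint ⊥ M hM
  refine ⟨P, hP, charZero_of_inj_zero fun n hn => ?_⟩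
  by_contra hn0
  rw [← map_natCast (Ideal.Quotient.mk P), Ideal.Quotient.eq_zero_iff_mem] at hn
  exact Set.disjoint_left.mp hPM hn ⟨n, mem_nonZeroDivisors_of_ne_zero hn0, rfl⟩

theorem Subring.finite_bot_of_natCast_eq_zero {R : Type*} [Ring R] {n : ℕ} (hn : n ≠ 0)
    (h : (n : R) = 0) : ((⊥ : Subring R) : Set R).Finite :=
  have : NeZero n := ⟨hn⟩
  (Set.finite_range (ZMod.castHom (ringChar.dvd h) R)).subset (bot_le (a := RingHom.range _))

structure IsDivisiveMeadow {R : Type*} [CommRing R] (d : R → R → R) : Prop where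
  inv_inv : ∀ x, d 1 (d 1 x) = x
  mul_self_div_self : ∀ x, d (x * x) x = x
  div_eq_mul_inv : ∀ x y, d x y = x * d 1 y

namespace IsDivisiveMeadow

variable {R : Type*} [CommRing R] {d : R → R → R}

theorem mul_self_mul_inv (hd : IsDivisiveMeadow d) (x : R) : x * x * d 1 x = x := by
  rw [← hd.div_eq_mul_inv, hd.mul_self_div_self]

theorem inv_mul_inv_mul_self (hd : IsDivisiveMeadow d) (x : R) : d 1 x * d 1 x * x = d 1 x := by
  simpa only [hd.inv_inv] using hd.mul_self_mul_inv (d 1 x)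

theorem map_inv {K : Type*} [Field K] (hd : IsDivisiveMeadow d) (ψ : R →+* K) (x : R) :
    ψ (d 1 x) = (ψ x)⁻¹ := by
  have h₁ := congrArg ψ (hd.mul_self_mul_inv x)
  have h₂ := congrArg ψ (hd.inv_mul_inv_mul_self x)
  simp only [map_mul] at h₁ h₂
  rcases eq_or_ne (ψ x) 0 with h | h
  · rw [← h₂, h, mul_zero, inv_zero]
  · refine eq_inv_of_mul_eq_one_left (mul_left_cancel₀ h ?_)
    rw [← mul_assoc, mul_right_comm, h₁, mul_one]

theorem map_div {K : Type*} [Field K] (hd : IsDivisiveMeadow d) (ψ : R →+* K) (x y : R) :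
    ψ (d x y) = ψ x / ψ y := by
  rw [hd.div_eq_mul_inv, map_mul, hd.map_inv, _root_.div_eq_mul_inv]

theorem map_mem_of_div_mem {K : Type*} [Field K] (hd : IsDivisiveMeadow d)
    (hmin : ∀ S : Subring R, (∀ x y : R, x ∈ S → y ∈ S → d x y ∈ S) → S = ⊤)
    (ψ : R →+* K) {F : Subring K} (hF : ∀ a ∈ F, ∀ b ∈ F, a / b ∈ F) (x : R) : ψ x ∈ F := by
  have hcomap : F.comap ψ = ⊤ := hmin _ fun a b ha hb => by
    simpa only [Subring.mem_comap, hd.map_div] using hF _ ha _ hb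
  have hx : x ∈ F.comap ψ := hcomap ▸ Subring.mem_top x
  exact hx

theorem div_mem_of_finite (hd : IsDivisiveMeadow d) {S : Subring R} [Finite S] {x y : R}
    (hx : x ∈ S) (hy : y ∈ S) : d x y ∈ S := by
  obtain ⟨n, z, hz⟩ := IsArtinian.exists_pow_succ_smul_dvd (⟨y, hy⟩ : S) (1 : S)
  have hinv : d 1 y = y * z ^ 2 :=
    eq_mul_sq_of_pow_succ_mul_eq_pow (hd.mul_self_mul_inv y) (hd.inv_mul_inv_mul_self y)
      (by simpa using congrArg Subtype.val hz)
  rw [hd.div_eq_mul_inv, hinv]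
  exact mul_mem hx (mul_mem hy (pow_mem z.2 2))

theorem charZero_of_infinite [Infinite R] (hd : IsDivisiveMeadow d)
    (hmin : ∀ S : Subring R, (∀ x y : R, x ∈ S → y ∈ S → d x y ∈ S) → S = ⊤) : CharZero R := by
  refine charZero_of_inj_zero fun n hn => ?_
  by_contra hn0
  have hfin := Subring.finite_bot_of_natCast_eq_zero hn0 hn
  have hbot : (⊥ : Subring R) = ⊤ := hmin ⊥ fun x y hx hy =>
    have : Finite (⊥ : Subring R) := hfin.to_subtype
    hd.div_mem_of_finite hx hy
  rw [hbot, Subring.coe_top] at hfin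
  exact Set.infinite_univ hfin

theorem exists_ringHom_rat_comp_eq {K : Type*} [Field K] [CharZero K] (hd : IsDivisiveMeadow d)
    (hmin : ∀ S : Subring R, (∀ x y : R, x ∈ S → y ∈ S → d x y ∈ S) → S = ⊤) (ψ : R →+* K) :
    ∃ φ : R →+* ℚ, (Rat.castHom K).comp φ = ψ := by
  have hψ : ∀ x, ψ x ∈ (Rat.castHom K).range := hd.map_mem_of_div_mem hmin ψ
    (by rintro _ ⟨a, rfl⟩ _ ⟨b, rfl⟩; exact ⟨a / b, map_div₀ _ a b⟩)
  let e := RingEquiv.ofLeftInverse (Function.leftInverse_invFun (Rat.castHom K).injective)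
  exact ⟨e.symm.toRingHom.comp (ψ.codRestrict _ hψ), RingHom.ext fun x =>
    congrArg Subtype.val (e.apply_symm_apply (ψ.codRestrict _ hψ x))⟩

theorem surjective_ringHom_rat (hd : IsDivisiveMeadow d) (φ : R →+* ℚ) :
    Function.Surjective φ := fun q =>
  ⟨d q.num q.den, by rw [hd.map_div, map_intCast, map_natCast, Rat.num_div_den]⟩

end IsDivisiveMeadow

theorem rat_homomorphic_image_of_infinite_minimal {R : Type*} [CommRing R]
    (d : R → R → R)
    (h1 : ∀ x : R, d 1 (d 1 x) = x) (h2 : ∀ x : R, d (x * x) x = x)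
    (h3 : ∀ x y : R, d x y = x * d 1 y)
    (hinf : Infinite R)
    (hmin : ∀ S : Subring R, (∀ x y : R, x ∈ S → y ∈ S → d x y ∈ S) → S = ⊤) :
    ∃ φ : R →+* ℚ, Function.Surjective φ ∧ ∀ x y : R, φ (d x y) = φ x / φ y := by
  have hd : IsDivisiveMeadow d := ⟨h1, h2, h3⟩
  have : CharZero R := hd.charZero_of_infinite hmin
  obtain ⟨P, hP, hchar⟩ := Ideal.exists_isPrime_charZero_quotient R
  obtain ⟨φ, -⟩ := hd.exists_ringHom_rat_comp_eq hmin
    ((algebraMap (R ⧸ P) (FractionRing (R ⧸ P))).comp (Ideal.Quotient.mk P))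
  exact ⟨φ, hd.surjective_ringHom_rat φ, hd.map_div φ⟩
end

section
/- Let (R, d) be a finite divisive meadow (the carrier R is a finite set). Then there exists a positive integer n such that d 1 x = x^n for all x ∈ R. Consequently, every finite divisive meadow admits transformation into simple fractions: every term over the signature of divisive meadows is equivalent in R to a quotient of two division-free terms. -/
/-!
Write `x⁻ = d 1 x`. The axioms say `x * x * x⁻ = x` and, since `x⁻⁻ = x`, also
`x⁻ * x⁻ * x = x⁻`: `x⁻` is the inverse of `x` in the group of the idempotent `x * x⁻`.
In a finite monoid the powers of all elements are simultaneously eventually periodic,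
`x ^ (a + p) = x ^ a` with `p > 0`, and then `x⁻ = x⁻ * x ^ (2 * p) = x ^ (2 * p - 1)`.
-/

theorem Monoid.exists_pow_add_eq_pow_of_finite (M : Type*) [Monoid M] [Finite M] :
    ∃ a p : ℕ, 0 < p ∧ ∀ x : M, x ^ (a + p) = x ^ a := by
  obtain ⟨a, b, hab, h⟩ := Finite.exists_ne_map_eq_of_infinite fun (n : ℕ) (x : M) => x ^ n
  rcases Nat.lt_or_gt_of_ne hab with hlt | hlt
  · refine ⟨a, b - a, by omega, fun x => ?_⟩
    rw [Nat.add_sub_cancel' hlt.le]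
    exact (congrFun h x).symm
  · refine ⟨b, a - b, by omega, fun x => ?_⟩
    rw [Nat.add_sub_cancel' hlt.le]
    exact congrFun h x

section WeakInverse

variable {M : Type*} [CommMonoid M] {x y : M}

theorem pow_succ_mul_pow_eq_of_mul_mul_eq (hyx : y * y * x = y) (k : ℕ) :
    y ^ (k + 1) * x ^ k = y := by
  induction k with
  | zero => simp
  | succ k ih =>
    calc y ^ (k + 2) * x ^ (k + 1) = y ^ k * x ^ k * (y * y * x) := by
          simp only [pow_add, pow_two, pow_one]; ac_rfl
      _ = y := by rw [hyx, mul_right_comm, ← pow_succ, ih]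

theorem mul_pow_add_two_eq_pow_succ_of_mul_mul_eq (hxy : x * x * y = x) (m : ℕ) :
    y * x ^ (m + 2) = x ^ (m + 1) := by
  calc y * x ^ (m + 2) = x ^ m * (x * x * y) := by
        simp only [pow_add, pow_two]; ac_rfl
    _ = x ^ (m + 1) := by rw [hxy, pow_succ]

theorem eq_pow_of_mul_mul_eq_of_pow_add_eq_pow (hxy : x * x * y = x) (hyx : y * y * x = y)
    {a p : ℕ} (hp : 0 < p) (hper : x ^ (a + p) = x ^ a) : y = x ^ (2 * p - 1) := by
  have hper2 : x ^ (a + 2 * p) = x ^ a := by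
    rw [two_mul, ← add_assoc, pow_add, hper, ← pow_add, hper]
  obtain ⟨q, rfl⟩ : ∃ q, p = q + 1 := ⟨p - 1, by omega⟩
  calc y = y ^ (a + 1) * x ^ (a + 2 * (q + 1)) := by
        rw [hper2, pow_succ_mul_pow_eq_of_mul_mul_eq hyx]
    _ = (y ^ (a + 1) * x ^ a) * x ^ (2 * q + 2) := by rw [mul_assoc, ← pow_add]; rfl
    _ = x ^ (2 * (q + 1) - 1) := by
        rw [pow_succ_mul_pow_eq_of_mul_mul_eq hyx, mul_pow_add_two_eq_pow_succ_of_mul_mul_eq hxy]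
        rfl

end WeakInverse

theorem finite_meadow_inverse_is_power {R : Type*} [CommRing R] [Finite R]
    (d : R → R → R)
    (h1 : ∀ x : R, d 1 (d 1 x) = x) (h2 : ∀ x : R, d (x * x) x = x)
    (h3 : ∀ x y : R, d x y = x * d 1 y) :
    ∃ n : ℕ, 0 < n ∧ ∀ x : R, d 1 x = x ^ n := by
  have hxy : ∀ x : R, x * x * d 1 x = x := fun x => by rw [← h3, h2]
  have hyx : ∀ x : R, d 1 x * d 1 x * x = d 1 x := fun x => by
    simpa only [h1] using hxy (d 1 x)
  obtain ⟨a, p, hp, hper⟩ := Monoid.exists_pow_add_eq_pow_of_finite R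
  exact ⟨2 * p - 1, by omega, fun x =>
    eq_pow_of_mul_mul_eq_of_pow_add_eq_pow (hxy x) (hyx x) hp (hper x)⟩
end

section
/- There do not exist polynomials f, g ∈ ℤ[X] such that for all x ∈ ℚ, 1 + 1/x = f̄(x) / ḡ(x), where f̄ and ḡ denote the images of f and g in ℚ[X] under the canonical map ℤ → ℚ, and / is the zero-totalized division of ℚ (a/0 = 0, as in Mathlib). Hence the divisive meadow of rational numbers does not admit transformation into simple fractions: the fraction 1 + 1/x is not equivalent over ℚ to any simple fraction. -/
/-! Suppose `1 + 1/x = F(x)/G(x)` for all `x`. Since `1/0 = 0`, at `x = 0` this reads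
`1 = F(0)/G(0)`, so `G(0) ≠ 0`. Away from the finitely many zeros of `X * G` one may clear
denominators, so the polynomial `(X + 1) * G - X * F` vanishes on an infinite set and is zero;
evaluating it at `0` gives `G(0) = 0`. -/

open Polynomial

theorem Polynomial.eq_zero_of_eval_eq_zero_of_eval_ne_zero {R : Type*} [CommRing R] [IsDomain R]
    [Infinite R] {P Q : R[X]} (hQ : Q ≠ 0) (h : ∀ x, Q.eval x ≠ 0 → P.eval x = 0) : P = 0 := by
  have hPQ : P * Q = 0 := zero_of_eval_zero _ fun x => by
    by_cases hx : Q.eval x = 0 <;> simp [hx, h]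
  exact (mul_eq_zero.mp hPQ).resolve_right hQ

theorem not_forall_one_add_one_div_eq_eval_div {K : Type*} [Field K] [Infinite K]
    (F G : K[X]) : ¬ ∀ x : K, 1 + 1 / x = F.eval x / G.eval x := by
  intro h
  have hG0 : G.eval 0 ≠ 0 := fun hz => by simpa [hz] using h 0
  have hXG : X * G ≠ 0 := mul_ne_zero X_ne_zero fun hz => hG0 (by simp [hz])
  have hcleared : (X + 1) * G - X * F = 0 := by
    refine eq_zero_of_eval_eq_zero_of_eval_ne_zero hXG fun x hx => ?_
    obtain ⟨hx0, hGx⟩ : x ≠ 0 ∧ G.eval x ≠ 0 := by simpa using hx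
    have hx' := h x
    field_simp at hx'
    simp only [eval_sub, eval_mul, eval_add, eval_X, eval_one]
    linear_combination hx'
  exact hG0 (by simpa using congrArg (eval 0) hcleared)

theorem rat_no_simple_fraction :
    ¬ ∃ f g : Polynomial ℤ, ∀ x : ℚ,
      1 + 1 / x =
        Polynomial.eval₂ (Int.castRingHom ℚ) x f /
          Polynomial.eval₂ (Int.castRingHom ℚ) x g := by
  rintro ⟨f, g, h⟩
  exact not_forall_one_add_one_div_eq_eval_div (f.map (Int.castRingHom ℚ))
    (g.map (Int.castRingHom ℚ)) (by simpa only [eval_map] using h)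
end

section
/- Let (R, d) be a divisive meadow of characteristic 0, i.e., (k : R) ≠ 0 for every positive integer k. Then there do not exist polynomials f, g ∈ ℤ[X] such that for all x ∈ R, 1 + d 1 x = d (f̄(x)) (ḡ(x)), where f̄ and ḡ denote the images of f and g in R[X] under the canonical map ℤ → R. Hence a divisive meadow of characteristic 0 does not admit transformation into simple fractions. -/
/-!
Any ring homomorphism `ψ` from the meadow to a field commutes with inversion, because `x` and
`d 1 x` are mutual weak inverses (`x * x * d 1 x = x` and symmetrically). Since no positive integer
is zero in `R`, some prime ideal avoids all of them, and the fraction field `K` of the quotient is a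
field of characteristic zero receiving such a `ψ`. At `x = n` the identity becomes
`1 + 1/n = f(n)/g(n)` in `K`, so `(X + 1) * g - X * f` vanishes at every positive integer and is
therefore zero. Then `g(0) = 0`, and at `x = 0` the identity reads `1 = f(0)/0 = 0`.
-/

open Polynomial

universe u

theorem eq_inv_of_mul_self_mul_eq {G₀ : Type*} [GroupWithZero G₀] {a b : G₀}
    (hab : a * a * b = a) (hba : b * b * a = b) : b = a⁻¹ := by
  rcases eq_or_ne a 0 with rfl | ha
  · simpa using hba.symm
  · refine eq_inv_of_mul_eq_one_right (mul_left_cancel₀ ha ?_)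
    rw [← mul_assoc, hab, mul_one]

theorem RingHom.map_eq_inv_of_regular {R K : Type*} [Semiring R] [DivisionRing K]
    (ψ : R →+* K) {inv : R → R} (hreg : ∀ x, x * x * inv x = x)
    (hinv : ∀ x, inv (inv x) = x) (x : R) : ψ (inv x) = (ψ x)⁻¹ := by
  have hreg' : inv x * inv x * x = inv x := by simpa only [hinv] using hreg (inv x)
  exact eq_inv_of_mul_self_mul_eq (by simpa using congrArg ψ (hreg x))
    (by simpa using congrArg ψ hreg')

theorem exists_ringHom_to_charZero_field {R : Type u} [CommRing R]
    (hchar : ∀ k : ℕ, 0 < k → (k : R) ≠ 0) :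
    ∃ (K : Type u) (_ : Field K) (_ : CharZero K), Nonempty (R →+* K) := by
  set M : Submonoid R := (nonZeroDivisors ℕ).map (Nat.castRingHom R)
  have hM : Disjoint ((⊥ : Ideal R) : Set R) M := by
    refine Set.disjoint_left.mpr ?_
    rintro _ h0 ⟨n, hn, rfl⟩
    exact hchar n (Nat.pos_of_ne_zero (nonZeroDivisors.ne_zero hn)) h0
  obtain ⟨p, hp, -, hpM⟩ := Ideal.exists_le_prime_disjoint ⊥ M hM
  let ψ : R →+* FractionRing (R ⧸ p) :=
    (algebraMap (R ⧸ p) (FractionRing (R ⧸ p))).comp (Ideal.Quotient.mk p)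
  refine ⟨FractionRing (R ⧸ p), inferInstance, charZero_of_inj_zero fun n hn => ?_, ⟨ψ⟩⟩
  rw [← map_natCast ψ, RingHom.comp_apply, IsFractionRing.to_map_eq_zero_iff,
    Ideal.Quotient.eq_zero_iff_mem] at hn
  by_contra hn0
  exact Set.disjoint_left.mp hpM hn ⟨n, mem_nonZeroDivisors_iff_ne_zero.mpr hn0, rfl⟩

theorem not_forall_one_add_inv_natCast_eq_div {K : Type*} [Field K] [CharZero K] (f g : ℤ[X]) :
    ¬ ∀ n : ℕ, 1 + (n : K)⁻¹ = ((f.eval (n : ℤ) : ℤ) : K) / ((g.eval (n : ℤ) : ℤ) : K) := by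
  intro h
  have hroot : ∀ n : ℕ, ((X + 1) * g - X * f).IsRoot (n + 1 : ℕ) := by
    intro n
    have hg : ((g.eval ((n + 1 : ℕ) : ℤ) : ℤ) : K) ≠ 0 := by
      intro hg
      have h' := h (n + 1)
      rw [hg, div_zero] at h'
      field_simp at h'
      exact_mod_cast h'
    have h' := h (n + 1)
    field_simp at h'
    simp only [IsRoot, eval_sub, eval_mul, eval_add, eval_X, eval_one, sub_eq_zero]
    exact_mod_cast h'
  have hP : (X + 1) * g - X * f = 0 :=
    eq_zero_of_infinite_isRoot _ <|
      (Set.infinite_range_of_injective fun a b hab => by simpa using hab).mono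
        (Set.range_subset_iff.mpr hroot)
  have hg0 : g.eval 0 = 0 := by simpa using congrArg (eval 0) hP
  simpa [hg0] using h 0

theorem char_zero_meadow_no_simple_fraction {R : Type*} [CommRing R]
    (d : R → R → R)
    (h1 : ∀ x : R, d 1 (d 1 x) = x) (h2 : ∀ x : R, d (x * x) x = x)
    (h3 : ∀ x y : R, d x y = x * d 1 y)
    (hchar : ∀ k : ℕ, 0 < k → (k : R) ≠ 0) :
    ¬ ∃ f g : Polynomial ℤ, ∀ x : R,
      1 + d 1 x =
        d (Polynomial.eval₂ (Int.castRingHom R) x f)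
          (Polynomial.eval₂ (Int.castRingHom R) x g) := by
  rintro ⟨f, g, hfg⟩
  obtain ⟨K, _, _, ⟨ψ⟩⟩ := exists_ringHom_to_charZero_field hchar
  have hreg : ∀ x : R, x * x * d 1 x = x := fun x => (h3 (x * x) x).symm.trans (h2 x)
  have hψ : ∀ x : R, ψ (d 1 x) = (ψ x)⁻¹ := ψ.map_eq_inv_of_regular hreg h1
  refine not_forall_one_add_inv_natCast_eq_div (K := K) f g fun n => ?_
  simpa [hψ, eval₂_at_natCast, div_eq_mul_inv] using congrArg ψ ((hfg n).trans (h3 _ _))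
end

section
/- Let p be a prime number and let (R, d) be a divisive meadow of characteristic p, i.e., (p : R) = 0 and (0 : R) ≠ 1. Then the following are equivalent: (a) there exists a polynomial h ∈ ℤ[X] whose image h̄ in R[X] is nonzero and such that h̄(x) = 0 for every x ∈ R; (b) there exists a positive integer n such that d 1 x = x^n for all x ∈ R. (These conditions characterize the divisive meadows of prime characteristic that admit transformation into simple fractions.) -/
/-!
A divisive meadow is von Neumann regular: `x * x * d 1 x = x`. In such a ring an element lying in
every maximal ideal vanishes, so an identity `x ^ k = x` holds in `R` as soon as it holds in every
residue field. If `h` vanishes on `R` and survives in `R[X]`, it survives in every residue field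
`R ⧸ I` (both sides factor through `ZMod p`), so `R ⧸ I` is finite with at most `deg h` elements
and `x ^ ((deg h)! + 1) = x` there. Conversely `d 1 x = x ^ n` forces `x ^ (n + 2) = x`, and
weak inverses are unique, which identifies `d 1 x` with the appropriate power of `x`.
-/

open Polynomial

theorem pow_mul_add_one_eq_self {M : Type*} [Monoid M] {a : M} {m : ℕ} (h : a ^ (m + 1) = a)
    (k : ℕ) : a ^ (m * k + 1) = a := by
  induction k with
  | zero => simp
  | succ k ih => rw [Nat.mul_succ, add_right_comm, pow_add, ih, ← pow_succ', h]

theorem Polynomial.card_le_natDegree_of_forall_eval_eq_zero {K : Type*} [CommRing K] [IsDomain K]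
    [Fintype K] {f : K[X]} (hf : f ≠ 0) (hroot : ∀ a, f.eval a = 0) :
    Fintype.card K ≤ f.natDegree := by
  classical
  exact card_le_degree_of_subset_roots fun a _ => (mem_roots hf).mpr (hroot a)

theorem FiniteField.pow_add_one_eq_self_of_card_sub_one_dvd {K : Type*} [Field K] [Fintype K]
    {m : ℕ} (hm : Fintype.card K - 1 ∣ m) (a : K) : a ^ (m + 1) = a := by
  obtain ⟨k, rfl⟩ := hm
  refine pow_mul_add_one_eq_self ?_ k
  rw [Nat.sub_add_cancel Fintype.card_pos, FiniteField.pow_card]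

theorem Polynomial.map_intCastRingHom_ne_zero_iff {S : Type*} [Ring S] [Nontrivial S] (p : ℕ)
    [Fact p.Prime] [CharP S p] (h : ℤ[X]) :
    h.map (Int.castRingHom S) ≠ 0 ↔ h.map (Int.castRingHom (ZMod p)) ≠ 0 := by
  rw [RingHom.ext_int (Int.castRingHom S)
      ((ZMod.castHom dvd_rfl S).comp (Int.castRingHom (ZMod p))), ← Polynomial.map_map,
    Polynomial.map_ne_zero_iff (ZMod.castHom dvd_rfl S).injective]

theorem eq_zero_of_mem_jacobson_bot_of_mul_mul_eq {R : Type*} [CommRing R] {x y : R}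
    (hx : x ∈ (⊥ : Ideal R).jacobson) (hy : x * x * y = x) : x = 0 := by
  have hunit : IsUnit (x * -y + 1) := Ideal.mem_jacobson_bot.mp hx (-y)
  rw [← hunit.mul_left_eq_zero]
  linear_combination -hy

theorem pow_eq_self_of_forall_quotient_maximal {R : Type*} [CommRing R]
    (hreg : ∀ x : R, ∃ y, x * x * y = x) {k : ℕ}
    (hquot : ∀ (I : Ideal R) [I.IsMaximal] (a : R ⧸ I), a ^ k = a) (x : R) : x ^ k = x := by
  obtain ⟨y, hy⟩ := hreg (x ^ k - x)
  refine sub_eq_zero.mp (eq_zero_of_mem_jacobson_bot_of_mul_mul_eq ?_ hy)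
  refine Ideal.mem_sInf.mpr fun I ⟨_, hI⟩ => ?_
  rw [← Ideal.Quotient.eq_zero_iff_mem, map_sub, map_pow, hquot I, sub_self]

theorem pow_factorial_add_one_eq_self {R : Type*} [CommRing R] (p : ℕ) [Fact p.Prime]
    [CharP R p] (hreg : ∀ x : R, ∃ y, x * x * y = x) {h : ℤ[X]}
    (hmap : h.map (Int.castRingHom R) ≠ 0)
    (hroot : ∀ x : R, h.eval₂ (Int.castRingHom R) x = 0) (x : R) :
    x ^ (h.natDegree.factorial + 1) = x := by
  refine pow_eq_self_of_forall_quotient_maximal hreg (fun I hI a => ?_) x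
  let := Ideal.Quotient.field I
  have : Nontrivial R := CharP.nontrivial_of_char_ne_one (Fact.out : p.Prime).one_lt.ne'
  have : CharP (R ⧸ I) p := (CharP.charP_iff_prime_eq_zero Fact.out).mpr <| by
    rw [← map_natCast (Ideal.Quotient.mk I), CharP.cast_eq_zero, map_zero]
  set f := h.map (Int.castRingHom (R ⧸ I))
  have hf : f ≠ 0 := (map_intCastRingHom_ne_zero_iff p h).mpr <|
    (map_intCastRingHom_ne_zero_iff p h).mp hmap
  have hfroot : ∀ a, f.eval a = 0 := by
    intro a
    obtain ⟨x, rfl⟩ := Ideal.Quotient.mk_surjective a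
    rw [eval_map, RingHom.ext_int (Int.castRingHom (R ⧸ I))
      ((Ideal.Quotient.mk I).comp (Int.castRingHom R)), ← hom_eval₂, hroot, map_zero]
  have : Finite (R ⧸ I) := not_infinite_iff_finite.mp fun _ => hf (zero_of_eval_zero f hfroot)
  have := Fintype.ofFinite (R ⧸ I)
  refine FiniteField.pow_add_one_eq_self_of_card_sub_one_dvd (Nat.dvd_factorial ?_ ?_) a
  · have := Fintype.one_lt_card (α := R ⧸ I); omega
  · have := card_le_natDegree_of_forall_eval_eq_zero hf hfroot
    have : f.natDegree ≤ h.natDegree := natDegree_map_le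
    omega

theorem exists_map_ne_zero_forall_eval₂_eq_zero_iff {R : Type*} [CommRing R] (p : ℕ)
    [Fact p.Prime] [CharP R p] (hreg : ∀ x : R, ∃ y, x * x * y = x) :
    (∃ h : ℤ[X], h.map (Int.castRingHom R) ≠ 0 ∧ ∀ x : R, h.eval₂ (Int.castRingHom R) x = 0) ↔
      ∃ n : ℕ, 0 < n ∧ ∀ x : R, x ^ (n + 2) = x := by
  have : Nontrivial R := CharP.nontrivial_of_char_ne_one (Fact.out : p.Prime).one_lt.ne'
  constructor
  · rintro ⟨h, hmap, hroot⟩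
    have hD := Nat.factorial_pos h.natDegree
    refine ⟨2 * h.natDegree.factorial - 1, by omega, fun x => ?_⟩
    rw [show 2 * h.natDegree.factorial - 1 + 2 = h.natDegree.factorial * 2 + 1 by omega]
    exact pow_mul_add_one_eq_self (pow_factorial_add_one_eq_self p hreg hmap hroot x) 2
  · rintro ⟨n, -, hpow⟩
    refine ⟨X ^ (n + 2) - X, ?_, fun x => by simp [hpow]⟩
    rw [Polynomial.map_sub, Polynomial.map_pow, map_X]
    exact (monic_X_pow_sub (by rw [degree_X]; exact_mod_cast (by omega : 1 < n + 2))).ne_zero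

theorem eq_of_mul_mul_eq_self {R : Type*} [CommRing R] {x y z : R} (hy : x * x * y = x)
    (hy' : y * y * x = y) (hz : x * x * z = x) (hz' : z * z * x = z) : y = z := by
  linear_combination (y * z + z * z) * hy - (y * y + y * z) * hz - hy' + hz'

namespace DivisiveMeadow

variable {R : Type*} [CommRing R] {d : R → R → R}

theorem mul_mul_inv_eq_self (h2 : ∀ x : R, d (x * x) x = x) (h3 : ∀ x y : R, d x y = x * d 1 y)
    (x : R) : x * x * d 1 x = x := by
  rw [← h3, h2]

theorem inv_eq_pow_iff (h1 : ∀ x : R, d 1 (d 1 x) = x) (h2 : ∀ x : R, d (x * x) x = x)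
    (h3 : ∀ x y : R, d x y = x * d 1 y) {n : ℕ} (hn : 0 < n) :
    (∀ x : R, d 1 x = x ^ n) ↔ ∀ x : R, x ^ (n + 2) = x := by
  have hinv := mul_mul_inv_eq_self h2 h3
  refine ⟨fun h x => ?_, fun h x => ?_⟩
  · calc x ^ (n + 2) = x * x * d 1 x := by rw [h]; ring
      _ = x := hinv x
  · refine eq_of_mul_mul_eq_self (hinv x) (by simpa only [h1] using hinv (d 1 x)) ?_ ?_
    · calc x * x * x ^ n = x ^ (n + 2) := by ring
        _ = x := h x
    · obtain ⟨m, rfl⟩ := Nat.exists_eq_add_one_of_ne_zero hn.ne'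
      calc x ^ (m + 1) * x ^ (m + 1) * x = x ^ (m + 1 + 2) * x ^ m := by ring
        _ = x ^ (m + 1) := by rw [h]; ring

end DivisiveMeadow

theorem prime_char_meadow_characterization {R : Type*} [CommRing R]
    (p : ℕ) (hp : p.Prime)
    (d : R → R → R)
    (h1 : ∀ x : R, d 1 (d 1 x) = x) (h2 : ∀ x : R, d (x * x) x = x)
    (h3 : ∀ x y : R, d x y = x * d 1 y)
    (hcharp : (p : R) = 0) (hnt : (0 : R) ≠ 1) :
    (∃ h : Polynomial ℤ, h.map (Int.castRingHom R) ≠ 0 ∧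
        ∀ x : R, Polynomial.eval₂ (Int.castRingHom R) x h = 0) ↔
      (∃ n : ℕ, 0 < n ∧ ∀ x : R, d 1 x = x ^ n) := by
  have : Fact p.Prime := ⟨hp⟩
  have : Nontrivial R := ⟨⟨0, 1, hnt⟩⟩
  have : CharP R p := (CharP.charP_iff_prime_eq_zero hp).mpr hcharp
  have hreg (x : R) : ∃ y, x * x * y = x := ⟨d 1 x, DivisiveMeadow.mul_mul_inv_eq_self h2 h3 x⟩
  rw [exists_map_ne_zero_forall_eval₂_eq_zero_iff p hreg]
  exact exists_congr fun n =>
    and_congr_right fun hn => (DivisiveMeadow.inv_eq_pow_iff h1 h2 h3 hn).symm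
end

section
/- For every natural number n ≥ 2, there do not exist multivariate polynomials f₁, …, f_{n−1}, g₁, …, g_{n−1} ∈ ℤ[X₁, …, Xₙ] such that for all x₁, …, xₙ ∈ ℝ: 1/x₁ + ⋯ + 1/xₙ = ∑_{j=1}^{n−1} f̄ⱼ(x₁, …, xₙ) / ḡⱼ(x₁, …, xₙ), where / is the zero-totalized division of ℝ (a/0 = 0, as in Mathlib) and f̄ⱼ, ḡⱼ denote the images of fⱼ, gⱼ in ℝ[X₁, …, Xₙ]. In other words, the sum of n distinct reciprocals 1/x₁ + ⋯ + 1/xₙ is not expressible over ℝ as a sum of fewer than n simple fractions. -/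
/-!
Work on the coordinate subspaces `V_T = {x | x l = 0 for l ∉ T}` and induct on the number
of fractions. Suppose `∑_{l ∈ T} 1/x_l = ∑_{j ∈ J} f_j/g_j` on `V_T` and pick `i ∈ T`. If
no `g_j` vanished identically on `V_{T∖i}`, clearing denominators would give the polynomial
identity `(∑_l ∏_{m ≠ l} x_m) ∏_j g_j = (∏_l x_l) (…)` on `V_T`; setting `x_i = 0` turns it
into `(∏_{m ≠ i} x_m) ∏_j g_j = 0` on `V_{T∖i}`, which is impossible. So some `g_j` vanishes
on `V_{T∖i}`, and there both `1/x_i` and `f_j/g_j` are `0` (division by zero is zero): we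
are left with `T ∖ i` and `J ∖ j`. Once `J` is empty and `T` is not, no such `g_j` exists.
-/

open MvPolynomial Finset

namespace MvPolynomial

theorem eq_of_eval_eq_of_eval_ne_zero {R σ : Type*} [CommRing R] [IsDomain R] [Infinite R]
    {p q r : MvPolynomial σ R} (hp : p ≠ 0) (h : ∀ x, eval x p ≠ 0 → eval x q = eval x r) :
    q = r := by
  have hpqr : p * (q - r) = 0 := funext fun x => by
    by_cases hx : eval x p = 0 <;> simp [hx, h]
  exact sub_eq_zero.mp ((mul_eq_zero.mp hpqr).resolve_left hp)

section zeroOutside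

variable {R σ : Type*} [CommSemiring R] {T S : Set σ}

noncomputable def zeroOutside (T : Set σ) : MvPolynomial σ R →ₐ[R] MvPolynomial σ R :=
  aeval (T.indicator X)

@[simp]
theorem zeroOutside_X_of_mem {i : σ} (hi : i ∈ T) : zeroOutside (R := R) T (X i) = X i := by
  simp [zeroOutside, hi]

@[simp]
theorem zeroOutside_X_of_notMem {i : σ} (hi : i ∉ T) : zeroOutside (R := R) T (X i) = 0 := by
  simp [zeroOutside, hi]

theorem eval_zeroOutside (x : σ → R) (p : MvPolynomial σ R) :
    eval x (zeroOutside T p) = eval (T.indicator x) p := by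
  rw [zeroOutside, aeval_def, eval_eval₂]
  congr 1
  · ext; simp
  · funext i
    by_cases hi : i ∈ T <;> simp [hi]

theorem eval_zeroOutside_of_forall_notMem {x : σ → R} (hx : ∀ i ∉ T, x i = 0)
    (p : MvPolynomial σ R) : eval x (zeroOutside T p) = eval x p := by
  rw [eval_zeroOutside, Set.indicator_eq_self.mpr fun i hi => by_contra fun h => hi (hx i h)]

theorem zeroOutside_comp_of_subset (hST : S ⊆ T) :
    (zeroOutside (R := R) S).comp (zeroOutside T) = zeroOutside S := by
  ext i : 1
  by_cases hi : i ∈ S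
  · simp [hi, hST hi]
  by_cases hi' : i ∈ T <;> simp [hi, hi']

end zeroOutside

end MvPolynomial

theorem Finset.sum_div_mul_prod {ι K : Type*} [Field K] [DecidableEq ι] (s : Finset ι)
    (a b : ι → K) (hb : ∀ j ∈ s, b j ≠ 0) :
    (∑ j ∈ s, a j / b j) * ∏ j ∈ s, b j = ∑ j ∈ s, a j * ∏ k ∈ s.erase j, b k := by
  rw [sum_mul]
  refine sum_congr rfl fun j hj => ?_
  rw [← mul_prod_erase s b hj, ← mul_assoc, div_mul_cancel₀ _ (hb j hj)]

section SumInvEqOn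

variable {σ ι K : Type*} [Field K]

def SumInvEqOn (T : Finset σ) (J : Finset ι) (f g : ι → MvPolynomial σ K) : Prop :=
  ∀ x : σ → K, (∀ i ∉ T, x i = 0) →
    ∑ i ∈ T, (x i)⁻¹ = ∑ j ∈ J, eval x (f j) / eval x (g j)

variable [DecidableEq σ] [DecidableEq ι] {T : Finset σ} {J : Finset ι}
  {f g : ι → MvPolynomial σ K} {i : σ}

theorem SumInvEqOn.erase (h : SumInvEqOn T J f g) (hi : i ∈ T) {j : ι} (hj : j ∈ J)
    (hg : zeroOutside (T.erase i : Set σ) (g j) = 0) :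
    SumInvEqOn (T.erase i) (J.erase j) f g := by
  intro x hx
  have hxT : ∀ l ∉ T, x l = 0 := fun l hl => hx l fun h => hl (mem_of_mem_erase h)
  have hxi : x i = 0 := hx i (notMem_erase i T)
  have hgj : eval x (g j) = 0 := by
    rw [← eval_zeroOutside_of_forall_notMem (by exact_mod_cast hx), hg, map_zero]
  have hsum := h x hxT
  rwa [← add_sum_erase T _ hi, ← add_sum_erase J _ hj, hxi, hgj, inv_zero, div_zero,
    zero_add, zero_add] at hsum

theorem SumInvEqOn.zeroOutside_mul_eq [Infinite K] (h : SumInvEqOn T J f g)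
    (hg : zeroOutside (T : Set σ) (∏ j ∈ J, g j) ≠ 0) :
    zeroOutside (T : Set σ) ((∑ l ∈ T, ∏ m ∈ T.erase l, X m) * ∏ j ∈ J, g j) =
      zeroOutside (T : Set σ)
        ((∏ l ∈ T, X l) * ∑ j ∈ J, f j * ∏ k ∈ J.erase j, g k) := by
  have hX : zeroOutside (T : Set σ) (∏ l ∈ T, (X l : MvPolynomial σ K)) ≠ 0 := by
    rw [map_prod, prod_congr rfl fun l hl => zeroOutside_X_of_mem (by exact_mod_cast hl)]
    exact prod_ne_zero_iff.mpr fun l _ => X_ne_zero l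
  refine eq_of_eval_eq_of_eval_ne_zero
    (p := zeroOutside (T : Set σ) ((∏ l ∈ T, X l) * ∏ j ∈ J, g j))
    (by rw [map_mul]; exact mul_ne_zero hX hg) fun x hx => ?_
  simp only [eval_zeroOutside, eval_mul, map_prod, map_sum, eval_X] at hx ⊢
  set y := (T : Set σ).indicator x
  have hy : ∀ l ∉ T, y l = 0 := fun l hl => Set.indicator_of_notMem (by exact_mod_cast hl) x
  obtain ⟨hyT, hgy⟩ := mul_ne_zero_iff.mp hx
  have hN :
      ∑ l ∈ T, ∏ m ∈ T.erase l, y m = (∑ l ∈ T, (y l)⁻¹) * ∏ l ∈ T, y l := by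
    simpa using (sum_div_mul_prod T 1 y fun l hl h0 => hyT (prod_eq_zero hl h0)).symm
  rw [hN, h y hy, ← sum_div_mul_prod _ _ _ fun j hj h0 => hgy (prod_eq_zero hj h0)]
  ring

theorem SumInvEqOn.exists_zeroOutside_erase_eq_zero [Infinite K] (h : SumInvEqOn T J f g)
    (hi : i ∈ T) : ∃ j ∈ J, zeroOutside (T.erase i : Set σ) (g j) = 0 := by
  by_contra! hg
  have hρ : (zeroOutside (R := K) (T.erase i : Set σ)).comp (zeroOutside (T : Set σ)) =
      zeroOutside (T.erase i : Set σ) :=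
    zeroOutside_comp_of_subset (coe_subset.mpr (erase_subset i T))
  have hG : zeroOutside (T.erase i : Set σ) (∏ j ∈ J, g j) ≠ 0 := by
    rw [map_prod]
    exact prod_ne_zero_iff.mpr hg
  have key := congrArg (zeroOutside (T.erase i : Set σ))
    (h.zeroOutside_mul_eq fun h0 => hG (by rw [← hρ, AlgHom.comp_apply, h0, map_zero]))
  rw [← AlgHom.comp_apply, ← AlgHom.comp_apply, hρ, map_mul, map_mul] at key
  have hP : zeroOutside (T.erase i : Set σ) (∏ l ∈ T, (X l : MvPolynomial σ K)) = 0 := by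
    rw [map_prod]
    exact prod_eq_zero hi (zeroOutside_X_of_notMem (by simp))
  have hN : zeroOutside (T.erase i : Set σ)
      (∑ l ∈ T, ∏ m ∈ T.erase l, (X m : MvPolynomial σ K)) = ∏ m ∈ T.erase i, X m := by
    rw [map_sum, sum_eq_single_of_mem i hi fun l _ hli => ?_, map_prod]
    · exact prod_congr rfl fun m hm => zeroOutside_X_of_mem (by exact_mod_cast hm)
    · rw [map_prod]
      exact prod_eq_zero (mem_erase.mpr ⟨Ne.symm hli, hi⟩) (zeroOutside_X_of_notMem (by simp))
  rw [hP, zero_mul, hN] at key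
  exact mul_ne_zero (prod_ne_zero_iff.mpr fun m _ => X_ne_zero m) hG key

theorem not_sumInvEqOn_of_card_lt [Infinite K] (J : Finset ι) :
    ∀ T : Finset σ, #J < #T → ¬ SumInvEqOn T J f g := by
  induction J using strongInduction with
  | H J ih =>
    intro T hcard h
    obtain ⟨i, hi⟩ := card_pos.mp (by omega : 0 < #T)
    obtain ⟨j, hj, hgj⟩ := h.exists_zeroOutside_erase_eq_zero hi
    refine ih _ (erase_ssubset hj) _ ?_ (h.erase hi hj hgj)
    have := card_pos.mpr ⟨j, hj⟩
    rw [card_erase_of_mem hj, card_erase_of_mem hi]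
    omega

end SumInvEqOn

theorem sum_of_reciprocals_needs_n_fractions (n : ℕ) (hn : 2 ≤ n) :
    ¬ ∃ f g : Fin (n - 1) → MvPolynomial (Fin n) ℤ,
      ∀ x : Fin n → ℝ,
        (∑ i : Fin n, 1 / x i) =
          ∑ j : Fin (n - 1),
            MvPolynomial.eval₂ (Int.castRingHom ℝ) x (f j) /
              MvPolynomial.eval₂ (Int.castRingHom ℝ) x (g j) := by
  rintro ⟨f, g, h⟩
  refine not_sumInvEqOn_of_card_lt (f := fun j => map (Int.castRingHom ℝ) (f j))
    (g := fun j => map (Int.castRingHom ℝ) (g j)) univ univ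
    (by simp only [card_univ, Fintype.card_fin]; omega) fun x _ => ?_
  simpa only [one_div, eval_map] using h x
end
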